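/- arXiv:1707.08635 — 6 statements merged into one kernel-verified Lean document; each statement's English description precedes it below -/
import Mathlib

section
/- Let a, b be positive reals with b/a irrational, and let m, n be positive integers. Then m·a < n·b if and only if m + ⌊m·a/b⌋ < n + ⌊n·b/a⌋. In other words, for an irrational ellipsoid the ordering of closed Reeb orbits by period coincides with the ordering by Conley–Zehnder index. -/
/-! Put `x = m a` and `y = n b`. If `x < y` then `⌊x / b⌋ < n` and `m ≤ ⌊y / a⌋`, which add up to the
strict inequality of indices; if `y ≤ x` the same two estimates, with the roles swapped, give the
reverse inequality non-strictly. -/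

section FloorComparison

variable {K : Type*} [Field K] [LinearOrder K] [IsStrictOrderedRing K] [FloorRing K]
  {a b : K} (ha : 0 < a) (hb : 0 < b) {m n : ℤ}

include ha hb

theorem add_floor_lt_add_floor_of_mul_lt (h : m * a < n * b) :
    m + ⌊m * a / b⌋ < n + ⌊n * b / a⌋ := by
  have hfloor_lt : ⌊m * a / b⌋ < n := Int.floor_lt.mpr ((div_lt_iff₀ hb).mpr h)
  have hle_floor : m ≤ ⌊n * b / a⌋ := Int.le_floor.mpr ((le_div_iff₀ ha).mpr h.le)
  omega

theorem add_floor_le_add_floor_of_mul_le (h : m * a ≤ n * b) :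
    m + ⌊m * a / b⌋ ≤ n + ⌊n * b / a⌋ := by
  have hfloor_le : ⌊m * a / b⌋ ≤ n := Int.floor_le_iff.mpr
    (((div_le_iff₀ hb).mpr h).trans_lt (lt_add_one _))
  have hle_floor : m ≤ ⌊n * b / a⌋ := Int.le_floor.mpr ((le_div_iff₀ ha).mpr h)
  omega

theorem mul_lt_mul_iff_add_floor_lt_add_floor :
    m * a < n * b ↔ m + ⌊m * a / b⌋ < n + ⌊n * b / a⌋ :=
  ⟨add_floor_lt_add_floor_of_mul_lt ha hb, fun h => not_le.mp fun hle =>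
    (add_floor_le_add_floor_of_mul_le hb ha hle).not_gt (by omega)⟩

end FloorComparison

theorem period_order_iff_cz_order_general (a b : ℝ) (ha : 0 < a) (hb : 0 < b)
    (m n : ℕ) :
    (m : ℝ) * a < (n : ℝ) * b ↔
      (m : ℤ) + ⌊(m : ℝ) * a / b⌋ < (n : ℤ) + ⌊(n : ℝ) * b / a⌋ := by
  exact_mod_cast mul_lt_mul_iff_add_floor_lt_add_floor (m := m) (n := n) ha hb

theorem period_order_iff_cz_order (a b : ℝ) (ha : 0 < a) (hb : 0 < b)
    (hirr : Irrational (b / a)) (m n : ℕ) (hm : 0 < m) (hn : 0 < n) :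
    (m : ℝ) * a < (n : ℝ) * b ↔
      (m : ℤ) + ⌊(m : ℝ) * a / b⌋ < (n : ℤ) + ⌊(n : ℝ) * b / a⌋ :=
  period_order_iff_cz_order_general a b ha hb m n
end

section
/- Let a₁ < b₁ and a₂ < b₂ be positive reals, and let k, ℓ, p, r be positive integers with k < b₁/a₁, k = ℓ + ⌊ℓ·a₂/b₂⌋, and p·r ≤ ℓ. Suppose positive integers r⁻₁,…,r⁻_m and s⁻₁,…,s⁻_n satisfy r + ⌊r·a₂/b₂⌋ − Σᵢ (r⁻ᵢ + ⌊r⁻ᵢ·a₁/b₁⌋) − Σⱼ (s⁻ⱼ + ⌊s⁻ⱼ·b₁/a₁⌋) ≥ 0. Then n = 0; that is, there can be no terms of the form s⁻ⱼ. -/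
/-!
Write `c₁ = b₁/a₁` and `c₂ = a₂/b₂`. For `c ≥ 0` the map `x ↦ x + ⌊x c⌋` is monotone on `ℕ`, so the
positive term is `r + ⌊r c₂⌋ ≤ ℓ + ⌊ℓ c₂⌋ = k`, every `r⁻`-term is nonnegative, and a single
`s⁻`-term is already at least `1 + ⌊c₁⌋ > k`, since `k < c₁`.
-/

open Finset

section AddFloorMul

variable {c : ℝ}

theorem monotone_add_floor_mul (hc : 0 ≤ c) :
    Monotone fun x : ℕ => (x : ℤ) + ⌊(x : ℝ) * c⌋ := by
  intro x y hxy
  have hfloor : ⌊(x : ℝ) * c⌋ ≤ ⌊(y : ℝ) * c⌋ :=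
    Int.floor_le_floor (mul_le_mul_of_nonneg_right (by exact_mod_cast hxy) hc)
  simp only
  omega

theorem add_floor_mul_nonneg (hc : 0 ≤ c) (x : ℕ) : 0 ≤ (x : ℤ) + ⌊(x : ℝ) * c⌋ := by
  simpa using monotone_add_floor_mul hc (Nat.zero_le x)

theorem floor_lt_add_floor_mul (hc : 0 ≤ c) {x : ℕ} (hx : 0 < x) :
    ⌊c⌋ < (x : ℤ) + ⌊(x : ℝ) * c⌋ := by
  have h := monotone_add_floor_mul hc hx
  simp only [Nat.cast_one, one_mul] at h
  omega

end AddFloorMul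

theorem no_beta_punctures_general (a₁ b₁ a₂ b₂ : ℝ)
    (ha₂ : 0 < a₂) (hab₂ : a₂ < b₂)
    (k ℓ p r : ℕ) (hp : 0 < p)
    (hkb : (k : ℝ) < b₁ / a₁)
    (hkℓ : (k : ℤ) = (ℓ : ℤ) + ⌊(ℓ : ℝ) * a₂ / b₂⌋)
    (hpr : p * r ≤ ℓ)
    (m n : ℕ) (rm : Fin m → ℕ) (sn : Fin n → ℕ)
    (hsn : ∀ j, 0 < sn j)
    (hind : 0 ≤ (r : ℤ) + ⌊(r : ℝ) * a₂ / b₂⌋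
        - (∑ i, ((rm i : ℤ) + ⌊(rm i : ℝ) * a₁ / b₁⌋))
        - ∑ j, ((sn j : ℤ) + ⌊(sn j : ℝ) * b₁ / a₁⌋)) :
    n = 0 := by
  by_contra hn
  obtain ⟨j₀⟩ : Nonempty (Fin n) := ⟨⟨0, Nat.pos_of_ne_zero hn⟩⟩
  have hc₁ : 0 ≤ b₁ / a₁ := (Nat.cast_nonneg k).trans hkb.le
  have hc₁' : 0 ≤ a₁ / b₁ := by rw [← inv_div]; positivity
  have hc₂ : 0 ≤ a₂ / b₂ := div_nonneg ha₂.le (ha₂.trans hab₂).le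
  simp only [mul_div_assoc] at hkℓ hind
  have hrℓ : r ≤ ℓ := (Nat.le_mul_of_pos_left r hp).trans hpr
  have h_pos : (r : ℤ) + ⌊(r : ℝ) * (a₂ / b₂)⌋ ≤ k := hkℓ ▸ monotone_add_floor_mul hc₂ hrℓ
  have h_rm : 0 ≤ ∑ i, ((rm i : ℤ) + ⌊(rm i : ℝ) * (a₁ / b₁)⌋) :=
    sum_nonneg fun i _ => add_floor_mul_nonneg hc₁' (rm i)
  have h_sn : (k : ℤ) < ∑ j, ((sn j : ℤ) + ⌊(sn j : ℝ) * (b₁ / a₁)⌋) :=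
    calc (k : ℤ) ≤ ⌊b₁ / a₁⌋ := Int.le_floor.2 (by exact_mod_cast hkb.le)
      _ < (sn j₀ : ℤ) + ⌊(sn j₀ : ℝ) * (b₁ / a₁)⌋ := floor_lt_add_floor_mul hc₁ (hsn j₀)
      _ ≤ _ := single_le_sum (fun j _ => add_floor_mul_nonneg hc₁ (sn j)) (mem_univ j₀)
  omega

theorem no_beta_punctures (a₁ b₁ a₂ b₂ : ℝ) (ha₁ : 0 < a₁) (hab₁ : a₁ < b₁)
    (ha₂ : 0 < a₂) (hab₂ : a₂ < b₂)
    (k ℓ p r : ℕ) (hk : 0 < k) (hℓ : 0 < ℓ) (hp : 0 < p) (hr : 0 < r)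
    (hkb : (k : ℝ) < b₁ / a₁)
    (hkℓ : (k : ℤ) = (ℓ : ℤ) + ⌊(ℓ : ℝ) * a₂ / b₂⌋)
    (hpr : p * r ≤ ℓ)
    (m n : ℕ) (rm : Fin m → ℕ) (sn : Fin n → ℕ)
    (hrm : ∀ i, 0 < rm i) (hsn : ∀ j, 0 < sn j)
    (hind : 0 ≤ (r : ℤ) + ⌊(r : ℝ) * a₂ / b₂⌋
        - (∑ i, ((rm i : ℤ) + ⌊(rm i : ℝ) * a₁ / b₁⌋))
        - ∑ j, ((sn j : ℤ) + ⌊(sn j : ℝ) * b₁ / a₁⌋)) :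
    n = 0 :=
  no_beta_punctures_general a₁ b₁ a₂ b₂ ha₂ hab₂ k ℓ p r hp hkb hkℓ hpr m n rm sn hsn hind
end

section
/- Let a₁ < b₁ and a₂ < b₂ be positive reals and let k, ℓ, p, r be positive integers with p·r ≤ ℓ and k = ℓ + ⌊ℓ·a₂/b₂⌋. If positive integers r⁻₁,…,r⁻_m satisfy r + ⌊r·a₂/b₂⌋ ≥ Σᵢ (r⁻ᵢ + ⌊r⁻ᵢ·a₁/b₁⌋), then Σᵢ r⁻ᵢ ≤ k/p. -/
open Finset

theorem multiplicity_bound (a₁ b₁ a₂ b₂ : ℝ) (ha₁ : 0 < a₁) (hab₁ : a₁ < b₁)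
    (ha₂ : 0 < a₂) (hab₂ : a₂ < b₂)
    (k ℓ p r : ℕ) (hk : 0 < k) (hℓ : 0 < ℓ) (hp : 0 < p) (hr : 0 < r)
    (hpr : p * r ≤ ℓ)
    (hkℓ : (k : ℤ) = (ℓ : ℤ) + ⌊(ℓ : ℝ) * a₂ / b₂⌋)
    (m : ℕ) (rm : Fin m → ℕ) (hrm : ∀ i, 0 < rm i)
    (hind : (∑ i, ((rm i : ℤ) + ⌊(rm i : ℝ) * a₁ / b₁⌋)) ≤ (r : ℤ) + ⌊(r : ℝ) * a₂ / b₂⌋) :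
    (∑ i, (rm i : ℝ)) ≤ (k : ℝ) / (p : ℝ) := by
  have hb₁ : (0:ℝ) < b₁ := ha₁.trans hab₁
  have hb₂ : (0:ℝ) < b₂ := ha₂.trans hab₂
  -- each floor term is nonnegative
  have hfloor : ∀ i, (0:ℤ) ≤ ⌊(rm i : ℝ) * a₁ / b₁⌋ := by
    intro i
    apply Int.floor_nonneg.mpr
    positivity
  have h1 : (∑ i, (rm i : ℤ)) ≤ (r : ℤ) + ⌊(r : ℝ) * a₂ / b₂⌋ := by
    refine le_trans ?_ hind
    apply Finset.sum_le_sum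
    intro i _
    linarith [hfloor i]
  -- p * (r + ⌊r a₂/b₂⌋) ≤ k
  have h2 : (p:ℤ) * ⌊(r : ℝ) * a₂ / b₂⌋ ≤ ⌊((p*r : ℕ) : ℝ) * a₂ / b₂⌋ := by
    apply Int.le_floor.mpr
    push_cast
    have hf : (⌊(r:ℝ)*a₂/b₂⌋:ℝ) ≤ (r:ℝ)*a₂/b₂ := Int.floor_le _
    have hp0 : (0:ℝ) ≤ (p:ℝ) := by positivity
    refine le_trans (mul_le_mul_of_nonneg_left hf hp0) ?_
    apply le_of_eq
    ring
  have h3 : ⌊((p*r : ℕ) : ℝ) * a₂ / b₂⌋ ≤ ⌊(ℓ : ℝ) * a₂ / b₂⌋ := by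
    apply Int.floor_le_floor
    have hc : ((p*r:ℕ):ℝ) ≤ (ℓ:ℝ) := by exact_mod_cast hpr
    have := mul_le_mul_of_nonneg_right hc ha₂.le
    exact (div_le_div_iff_of_pos_right hb₂).mpr this
  have h4 : (p:ℤ) * ((r : ℤ) + ⌊(r : ℝ) * a₂ / b₂⌋) ≤ (k:ℤ) := by
    rw [hkℓ, mul_add]
    have : (p:ℤ) * r ≤ (ℓ:ℤ) := by exact_mod_cast hpr
    have := h2.trans h3
    linarith
  have h5 : (p:ℤ) * (∑ i, (rm i : ℤ)) ≤ (k:ℤ) := by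
    refine le_trans ?_ h4
    have hp' : (0:ℤ) ≤ (p:ℤ) := by positivity
    exact mul_le_mul_of_nonneg_left h1 hp'
  have hpR : (0:ℝ) < (p:ℝ) := by exact_mod_cast hp
  rw [le_div_iff₀ hpR]
  have : ((p:ℝ)) * (∑ i, (rm i : ℝ)) ≤ (k:ℝ) := by exact_mod_cast h5
  linarith
end

section
/- Let a₁ < b₁, a₂ < b₂ be positive reals, k, ℓ, p, r, s positive integers with r·p = k, s·p = ℓ, and k < b₁/a₁. Define index(u) = 2(ℓ + ⌊ℓ·a₂/b₂⌋ − k − ⌊k·a₁/b₁⌋) and index(v) = 2(s + ⌊s·a₂/b₂⌋ − r − ⌊r·a₁/b₁⌋). Then index(u) − p·index(v) = 2(⌊p·s·a₂/b₂⌋ − p·⌊s·a₂/b₂⌋) ≥ 0. In particular, if index(u) = 0 and index(v) ≥ 0 then index(v) = 0. -/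
/-!
A `p`-fold cover multiplies both ends of the cylinder by `p`. Since `r ≤ k < b₁ / a₁`, the
floor terms at the negative end vanish for `u` and `v` alike, so the defect
`index u - p * index v` is `2 (⌊p x⌋ - p ⌊x⌋) ≥ 0` with `x = s a₂ / b₂`.
-/

theorem Int.natCast_mul_floor_le_floor_mul {R : Type*} [Ring R] [LinearOrder R]
    [IsStrictOrderedRing R] [FloorRing R] (p : ℕ) (x : R) :
    (p : ℤ) * ⌊x⌋ ≤ ⌊(p : R) * x⌋ := by
  rw [Int.le_floor]
  push_cast
  exact mul_le_mul_of_nonneg_left (Int.floor_le x) p.cast_nonneg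

theorem Int.floor_div_eq_zero {R : Type*} [Field R] [LinearOrder R] [IsStrictOrderedRing R]
    [FloorRing R] {x c : R} (hx : 0 ≤ x) (hxc : x < c) : ⌊x / c⌋ = 0 := by
  have hc : 0 < c := hx.trans_lt hxc
  rw [Int.floor_eq_zero_iff]
  exact ⟨div_nonneg hx hc.le, (div_lt_one hc).mpr hxc⟩

/-- `n * a / b = n / (b / a)` holds for all reals, so no sign condition on `a` is needed. -/
theorem floor_natCast_mul_div_eq_zero {n : ℕ} {a b : ℝ} (h : (n : ℝ) < b / a) :
    ⌊(n : ℝ) * a / b⌋ = 0 := by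
  rw [← div_div_eq_mul_div]
  exact Int.floor_div_eq_zero n.cast_nonneg h

/-- The Fredholm index of a cylinder from `α₁^m` to `α₂^n` in `E(a₂, b₂) \ E(a₁, b₁)`. -/
noncomputable def cylinderIndex (a₁ b₁ a₂ b₂ : ℝ) (m n : ℕ) : ℤ :=
  2 * ((n : ℤ) + ⌊(n : ℝ) * a₂ / b₂⌋ - (m : ℤ) - ⌊(m : ℝ) * a₁ / b₁⌋)

theorem cylinderIndex_mul_sub_mul {a₁ b₁ a₂ b₂ : ℝ} {m n p : ℕ} (hp : 0 < p)
    (hmp : ((m * p : ℕ) : ℝ) < b₁ / a₁) :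
    cylinderIndex a₁ b₁ a₂ b₂ (m * p) (n * p) - p * cylinderIndex a₁ b₁ a₂ b₂ m n
      = 2 * (⌊(p : ℝ) * n * a₂ / b₂⌋ - p * ⌊(n : ℝ) * a₂ / b₂⌋) := by
  have hm : (m : ℝ) < b₁ / a₁ :=
    lt_of_le_of_lt (by exact_mod_cast Nat.le_mul_of_pos_right m hp) hmp
  simp only [cylinderIndex, floor_natCast_mul_div_eq_zero hm, floor_natCast_mul_div_eq_zero hmp]
  push_cast
  rw [mul_comm (n : ℝ)]
  ring

theorem underlying_index_zero_general (a₁ b₁ a₂ b₂ : ℝ)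
    (k ℓ p r s : ℕ) (hp : 0 < p)
    (hrp : r * p = k) (hsp : s * p = ℓ) (hkb : (k : ℝ) < b₁ / a₁) :
    (2 * ((ℓ : ℤ) + ⌊(ℓ : ℝ) * a₂ / b₂⌋ - (k : ℤ) - ⌊(k : ℝ) * a₁ / b₁⌋)
        - (p : ℤ) * (2 * ((s : ℤ) + ⌊(s : ℝ) * a₂ / b₂⌋ - (r : ℤ) - ⌊(r : ℝ) * a₁ / b₁⌋))
      = 2 * (⌊(p : ℝ) * (s : ℝ) * a₂ / b₂⌋ - (p : ℤ) * ⌊(s : ℝ) * a₂ / b₂⌋)) ∧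
    0 ≤ 2 * (⌊(p : ℝ) * (s : ℝ) * a₂ / b₂⌋ - (p : ℤ) * ⌊(s : ℝ) * a₂ / b₂⌋) ∧
    (2 * ((ℓ : ℤ) + ⌊(ℓ : ℝ) * a₂ / b₂⌋ - (k : ℤ) - ⌊(k : ℝ) * a₁ / b₁⌋) = 0 →
      0 ≤ 2 * ((s : ℤ) + ⌊(s : ℝ) * a₂ / b₂⌋ - (r : ℤ) - ⌊(r : ℝ) * a₁ / b₁⌋) →
      2 * ((s : ℤ) + ⌊(s : ℝ) * a₂ / b₂⌋ - (r : ℤ) - ⌊(r : ℝ) * a₁ / b₁⌋) = 0) := by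
  subst hrp hsp
  have defect : cylinderIndex a₁ b₁ a₂ b₂ (r * p) (s * p) - p * cylinderIndex a₁ b₁ a₂ b₂ r s
      = 2 * (⌊(p : ℝ) * s * a₂ / b₂⌋ - p * ⌊(s : ℝ) * a₂ / b₂⌋) :=
    cylinderIndex_mul_sub_mul hp hkb
  have defect_nonneg : (p : ℤ) * ⌊(s : ℝ) * a₂ / b₂⌋ ≤ ⌊(p : ℝ) * s * a₂ / b₂⌋ := by
    simpa only [mul_div_assoc, mul_assoc] using
      Int.natCast_mul_floor_le_floor_mul p ((s : ℝ) * a₂ / b₂)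
  refine ⟨defect, by omega, fun hu hv => ?_⟩
  have hpv : (p : ℤ) * cylinderIndex a₁ b₁ a₂ b₂ r s ≤ 0 := by
    change cylinderIndex a₁ b₁ a₂ b₂ (r * p) (s * p) = 0 at hu
    omega
  exact le_antisymm (nonpos_of_mul_nonpos_right hpv (by exact_mod_cast hp)) hv

theorem underlying_index_zero (a₁ b₁ a₂ b₂ : ℝ) (ha₁ : 0 < a₁) (hab₁ : a₁ < b₁)
    (ha₂ : 0 < a₂) (hab₂ : a₂ < b₂)
    (k ℓ p r s : ℕ) (hk : 0 < k) (hℓ : 0 < ℓ) (hp : 0 < p) (hr : 0 < r) (hs : 0 < s)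
    (hrp : r * p = k) (hsp : s * p = ℓ) (hkb : (k : ℝ) < b₁ / a₁) :
    (2 * ((ℓ : ℤ) + ⌊(ℓ : ℝ) * a₂ / b₂⌋ - (k : ℤ) - ⌊(k : ℝ) * a₁ / b₁⌋)
        - (p : ℤ) * (2 * ((s : ℤ) + ⌊(s : ℝ) * a₂ / b₂⌋ - (r : ℤ) - ⌊(r : ℝ) * a₁ / b₁⌋))
      = 2 * (⌊(p : ℝ) * (s : ℝ) * a₂ / b₂⌋ - (p : ℤ) * ⌊(s : ℝ) * a₂ / b₂⌋)) ∧
    0 ≤ 2 * (⌊(p : ℝ) * (s : ℝ) * a₂ / b₂⌋ - (p : ℤ) * ⌊(s : ℝ) * a₂ / b₂⌋) ∧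
    (2 * ((ℓ : ℤ) + ⌊(ℓ : ℝ) * a₂ / b₂⌋ - (k : ℤ) - ⌊(k : ℝ) * a₁ / b₁⌋) = 0 →
      0 ≤ 2 * ((s : ℤ) + ⌊(s : ℝ) * a₂ / b₂⌋ - (r : ℤ) - ⌊(r : ℝ) * a₁ / b₁⌋) →
      2 * ((s : ℤ) + ⌊(s : ℝ) * a₂ / b₂⌋ - (r : ℤ) - ⌊(r : ℝ) * a₁ / b₁⌋) = 0) :=
  underlying_index_zero_general a₁ b₁ a₂ b₂ k ℓ p r s hp hrp hsp hkb
end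

section
/- Let a₂ < b₂, a₁ < b₁ be positive reals, k, ℓ, p, r positive integers with k < b₁/a₁, k = ℓ + ⌊ℓ·a₂/b₂⌋, and p·r + ⌊p·r·b₂/a₂⌋ ≤ ℓ + ⌊ℓ·a₂/b₂⌋. Suppose positive integers r⁻₁,…,r⁻_m, s⁻₁,…,s⁻_n satisfy r + ⌊r·b₂/a₂⌋ − Σᵢ(r⁻ᵢ + ⌊r⁻ᵢ·a₁/b₁⌋) − Σⱼ(s⁻ⱼ + ⌊s⁻ⱼ·b₁/a₁⌋) ≥ 0. Then n = 0 and Σᵢ r⁻ᵢ ≤ k/p, and the quantity 2( p·r + ⌊p·r·b₂/a₂⌋ − Σᵢ(p·r⁻ᵢ + ⌊p·r⁻ᵢ·a₁/b₁⌋) ) is nonnegative. -/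
/-!
Write `t = r + ⌊r b₂ / a₂⌋`. Iterating an orbit at least multiplies this index, since
`p ⌊x⌋ ≤ ⌊p x⌋`, so the hypothesis on `β₂^{pr}` gives `p t ≤ k`. All index terms at the negative
ends are nonnegative, while each one at `β₁` exceeds `k` because `k < b₁ / a₁`; as the index
inequality bounds their total by `t ≤ k`, there are none. What remains gives `p ∑ r⁻ᵢ ≤ p t ≤ k`,
so each `p r⁻ᵢ < b₁ / a₁`, the floors `⌊p r⁻ᵢ a₁ / b₁⌋` vanish, and the index of the `p`-fold cover
is at least `p t - p ∑ r⁻ᵢ ≥ 0`.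
-/

open Finset

section EllipsoidIndex

variable {K : Type*} [Field K] [LinearOrder K] [FloorRing K]

/-- `2 * ellipsoidIndex a b r + 1` is the Conley–Zehnder index of the `r`-fold iterate of the Reeb
orbit of action `b` on the boundary of the ellipsoid `E(a, b)`; the orbit of action `a` has
`ellipsoidIndex b a r`. -/
def ellipsoidIndex (a b : K) (r : ℕ) : ℤ := r + ⌊(r : K) * b / a⌋

theorem ellipsoidIndex_mul (a b : K) (p r : ℕ) :
    ellipsoidIndex a b (p * r) = p * r + ⌊(p : K) * r * b / a⌋ := by
  simp [ellipsoidIndex]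

variable [IsStrictOrderedRing K]

theorem natCast_mul_floor_le_floor_mul (p : ℕ) (x : K) : (p : ℤ) * ⌊x⌋ ≤ ⌊(p : K) * x⌋ :=
  Int.le_floor.2 <| by
    push_cast
    exact mul_le_mul_of_nonneg_left (Int.floor_le x) p.cast_nonneg

theorem mul_ellipsoidIndex_le (a b : K) (p r : ℕ) :
    p * ellipsoidIndex a b r ≤ ellipsoidIndex a b (p * r) := by
  have h := natCast_mul_floor_le_floor_mul p ((r : K) * b / a)
  simp only [ellipsoidIndex, Nat.cast_mul, mul_div_assoc, mul_assoc] at h ⊢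
  linarith

theorem le_ellipsoidIndex {a b : K} (hab : 0 ≤ b / a) (r : ℕ) :
    (r : ℤ) ≤ ellipsoidIndex a b r := by
  have : 0 ≤ ⌊(r : K) * b / a⌋ := Int.floor_nonneg.2 (by rw [mul_div_assoc]; positivity)
  simp only [ellipsoidIndex]
  linarith

theorem lt_ellipsoidIndex {a b : K} {k s : ℕ} (hk : (k : K) < b / a) (hs : 0 < s) :
    (k : ℤ) < ellipsoidIndex a b s := by
  have hfloor : (k : ℤ) ≤ ⌊(s : K) * b / a⌋ := Int.le_floor.2 <| by
    have hba : 0 < b / a := (Nat.cast_nonneg k).trans_lt hk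
    have hs' : (1 : K) ≤ s := by exact_mod_cast hs
    rw [Int.cast_natCast, mul_div_assoc]
    nlinarith
  simp only [ellipsoidIndex]
  omega

theorem ellipsoidIndex_eq_self {a b : K} {r : ℕ} (hr : (r : K) < a / b) :
    ellipsoidIndex a b r = r := by
  have hab : 0 < a / b := (Nat.cast_nonneg r).trans_lt hr
  have hfloor : ⌊(r : K) * b / a⌋ = 0 := by
    rw [Int.floor_eq_zero_iff, ← div_div_eq_mul_div]
    exact ⟨by positivity, (div_lt_one hab).2 hr⟩
  simp [ellipsoidIndex, hfloor]

end EllipsoidIndex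

theorem isEmpty_of_sum_le_of_lt {ι M : Type*} [Fintype ι] [AddCommMonoid M] [PartialOrder M]
    [IsOrderedAddMonoid M] {f : ι → M} {k : M} (hk : 0 ≤ k) (hf : ∀ j, k < f j)
    (hsum : ∑ j, f j ≤ k) : IsEmpty ι :=
  ⟨fun j => (hsum.trans_lt (hf j)).not_ge <|
    single_le_sum (fun i _ => hk.trans (hf i).le) (mem_univ j)⟩

theorem case_two_positive_general (a₁ b₁ a₂ b₂ : ℝ)
    (k ℓ p r : ℕ) (hp : 0 < p)
    (hkb : (k : ℝ) < b₁ / a₁)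
    (hkℓ : (k : ℤ) = (ℓ : ℤ) + ⌊(ℓ : ℝ) * a₂ / b₂⌋)
    (hcz : (p : ℤ) * (r : ℤ) + ⌊(p : ℝ) * (r : ℝ) * b₂ / a₂⌋ ≤ (ℓ : ℤ) + ⌊(ℓ : ℝ) * a₂ / b₂⌋)
    (m n : ℕ) (rm : Fin m → ℕ) (sn : Fin n → ℕ)
    (hsn : ∀ j, 0 < sn j)
    (hind : 0 ≤ (r : ℤ) + ⌊(r : ℝ) * b₂ / a₂⌋
        - (∑ i, ((rm i : ℤ) + ⌊(rm i : ℝ) * a₁ / b₁⌋))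
        - ∑ j, ((sn j : ℤ) + ⌊(sn j : ℝ) * b₁ / a₁⌋)) :
    n = 0 ∧ (∑ i, (rm i : ℝ)) ≤ (k : ℝ) / (p : ℝ) ∧
      0 ≤ 2 * ((p : ℤ) * (r : ℤ) + ⌊(p : ℝ) * (r : ℝ) * b₂ / a₂⌋
          - ∑ i, ((p : ℤ) * (rm i : ℤ) + ⌊(p : ℝ) * (rm i : ℝ) * a₁ / b₁⌋)) := by
  change 0 ≤ ellipsoidIndex a₂ b₂ r - ∑ i, ellipsoidIndex b₁ a₁ (rm i)
    - ∑ j, ellipsoidIndex a₁ b₁ (sn j) at hind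
  have hpt : p * ellipsoidIndex a₂ b₂ r ≤ k :=
    (mul_ellipsoidIndex_le a₂ b₂ p r).trans (by rwa [ellipsoidIndex_mul, hkℓ])
  have hab₁ : 0 ≤ a₁ / b₁ := by
    rw [← inv_div]
    exact inv_nonneg.2 ((Nat.cast_nonneg k).trans hkb.le)
  have hrm : ∑ i, (rm i : ℤ) ≤ ∑ i, ellipsoidIndex b₁ a₁ (rm i) :=
    sum_le_sum fun i _ => le_ellipsoidIndex hab₁ (rm i)
  have hrm_nonneg : 0 ≤ ∑ i, (rm i : ℤ) := sum_nonneg fun i _ => Int.natCast_nonneg _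
  have hsn_lt (j : Fin n) : (k : ℤ) < ellipsoidIndex a₁ b₁ (sn j) :=
    lt_ellipsoidIndex hkb (hsn j)
  have hsn_nonneg : 0 ≤ ∑ j, ellipsoidIndex a₁ b₁ (sn j) :=
    sum_nonneg fun j _ => (Int.natCast_nonneg k).trans (hsn_lt j).le
  have htk : ellipsoidIndex a₂ b₂ r ≤ k :=
    (le_mul_of_one_le_left (by linarith) (by exact_mod_cast hp)).trans hpt
  have hn : n = 0 := (Fintype.card_fin n).symm.trans <| Fintype.card_eq_zero_iff.2 <|
    isEmpty_of_sum_le_of_lt (Int.natCast_nonneg k) hsn_lt (by linarith)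
  subst hn
  have hpsum : p * ∑ i, (rm i : ℤ) ≤ p * ellipsoidIndex a₂ b₂ r :=
    mul_le_mul_of_nonneg_left (by simp only [univ_eq_empty, sum_empty] at hind; linarith)
      (by positivity)
  have hfloor (i : Fin m) : ellipsoidIndex b₁ a₁ (p * rm i) = p * rm i := by
    refine ellipsoidIndex_eq_self (lt_of_le_of_lt ?_ hkb)
    have hle := (mul_le_mul_of_nonneg_left (single_le_sum (fun j _ => Int.natCast_nonneg (rm j))
      (mem_univ i)) (Int.natCast_nonneg p)).trans (hpsum.trans hpt)
    exact_mod_cast hle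
  refine ⟨rfl, ?_, ?_⟩
  · rw [le_div_iff₀ (by exact_mod_cast hp), mul_comm]
    exact_mod_cast hpsum.trans hpt
  · simp only [← ellipsoidIndex_mul, hfloor, ← mul_sum]
    linarith [mul_ellipsoidIndex_le a₂ b₂ p r]

theorem case_two_positive (a₁ b₁ a₂ b₂ : ℝ) (ha₁ : 0 < a₁) (hab₁ : a₁ < b₁)
    (ha₂ : 0 < a₂) (hab₂ : a₂ < b₂)
    (k ℓ p r : ℕ) (hk : 0 < k) (hℓ : 0 < ℓ) (hp : 0 < p) (hr : 0 < r)
    (hkb : (k : ℝ) < b₁ / a₁)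
    (hkℓ : (k : ℤ) = (ℓ : ℤ) + ⌊(ℓ : ℝ) * a₂ / b₂⌋)
    (hcz : (p : ℤ) * (r : ℤ) + ⌊(p : ℝ) * (r : ℝ) * b₂ / a₂⌋ ≤ (ℓ : ℤ) + ⌊(ℓ : ℝ) * a₂ / b₂⌋)
    (m n : ℕ) (rm : Fin m → ℕ) (sn : Fin n → ℕ)
    (hrm : ∀ i, 0 < rm i) (hsn : ∀ j, 0 < sn j)
    (hind : 0 ≤ (r : ℤ) + ⌊(r : ℝ) * b₂ / a₂⌋
        - (∑ i, ((rm i : ℤ) + ⌊(rm i : ℝ) * a₁ / b₁⌋))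
        - ∑ j, ((sn j : ℤ) + ⌊(sn j : ℝ) * b₁ / a₁⌋)) :
    n = 0 ∧ (∑ i, (rm i : ℝ)) ≤ (k : ℝ) / (p : ℝ) ∧
      0 ≤ 2 * ((p : ℤ) * (r : ℤ) + ⌊(p : ℝ) * (r : ℝ) * b₂ / a₂⌋
          - ∑ i, ((p : ℤ) * (rm i : ℤ) + ⌊(p : ℝ) * (rm i : ℝ) * a₁ / b₁⌋)) :=
  case_two_positive_general a₁ b₁ a₂ b₂ k ℓ p r hp hkb hkℓ hcz m n rm sn hsn hind
end

section
/- Let a < b be positive reals. For any positive integers r⁺, and r⁻₁,…,r⁻_m, s⁻₁,…,s⁻_n with r⁺·a ≥ Σᵢ r⁻ᵢ·a + Σⱼ s⁻ⱼ·b, the integer I = (r⁺ + ⌊r⁺a/b⌋) − Σᵢ(r⁻ᵢ + ⌊r⁻ᵢa/b⌋) − Σⱼ(s⁻ⱼ + ⌊s⁻ⱼb/a⌋) is even as a contribution to the index 2I, and if r⁺·a > Σᵢ r⁻ᵢ·a + Σⱼ s⁻ⱼ·b (strict inequality, i.e. positive dλ-area) with b/a irrational, then I ≥ 1, i.e. the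 index 2I is at least 2. -/
/-!
Write `N(L) = ⌊L/a⌋ + ⌊L/b⌋`. Each summand of the index is `N` at an action:
`r + ⌊r a/b⌋ = N(r a)` and `s + ⌊s b/a⌋ = N(s b)`. Since the floor is superadditive, so is `N`,
hence the negative ends contribute at most `N(A)`, where `A` is their total action. If `A < r⁺ a`,
then `⌊A/a⌋ < r⁺` because `r⁺ a` is a multiple of `a`, so `N(A) < N(r⁺ a)` and the index is at
least `2`.
-/

open Finset

/-- For `L ≥ 0`, the number of Reeb orbits of `∂E(a, b)`, iterates included, of action at most
`L`: the iterates `k a` and `l b` with `k, l ≥ 1`. -/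
noncomputable def actionCount (a b L : ℝ) : ℤ := ⌊L / a⌋ + ⌊L / b⌋

section

variable {a b : ℝ}

theorem actionCount_natCast_mul_left (ha : a ≠ 0) (b : ℝ) (k : ℕ) :
    actionCount a b (k * a) = k + ⌊(k : ℝ) * a / b⌋ := by
  rw [actionCount, mul_div_cancel_right₀ _ ha, Int.floor_natCast]

theorem actionCount_natCast_mul_right (a : ℝ) (hb : b ≠ 0) (k : ℕ) :
    actionCount a b (k * b) = k + ⌊(k : ℝ) * b / a⌋ := by
  rw [actionCount, mul_div_cancel_right₀ _ hb, Int.floor_natCast, add_comm]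

theorem le_actionCount_add (a b x y : ℝ) :
    actionCount a b x + actionCount a b y ≤ actionCount a b (x + y) := by
  have hx := Int.le_floor_add (x / a) (y / a)
  have hy := Int.le_floor_add (x / b) (y / b)
  rw [← add_div] at hx hy
  unfold actionCount
  omega

theorem sum_actionCount_le {ι : Type*} (a b : ℝ) (s : Finset ι) (L : ι → ℝ) :
    ∑ i ∈ s, actionCount a b (L i) ≤ actionCount a b (∑ i ∈ s, L i) := by
  classical
  induction s using Finset.induction_on with
  | empty => simp [actionCount]
  | insert i s hi ih =>
    rw [sum_insert hi, sum_insert hi]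
    exact (add_le_add_right ih _).trans (le_actionCount_add a b _ _)

theorem actionCount_lt_natCast_mul_left (ha : 0 < a) (hb : 0 < b) {L : ℝ} {k : ℕ}
    (hL : L < k * a) :
    actionCount a b L < actionCount a b (k * a) := by
  have hfloor_a : ⌊L / a⌋ < ⌊(k * a) / a⌋ := by
    rw [mul_div_cancel_right₀ _ ha.ne', Int.floor_natCast, Int.floor_lt]
    exact_mod_cast (div_lt_iff₀ ha).2 hL
  have hfloor_b : ⌊L / b⌋ ≤ ⌊(k * a) / b⌋ :=
    Int.floor_mono (div_le_div_of_nonneg_right hL.le hb.le)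
  exact add_lt_add_of_lt_of_le hfloor_a hfloor_b

end

theorem positive_area_index_ge_two_general (a b : ℝ) (ha : 0 < a) (hab : a < b)
    (rp : ℕ) (m n : ℕ) (r : Fin m → ℕ) (s : Fin n → ℕ) :
    Even (2 * (((rp : ℤ) + ⌊(rp : ℝ) * a / b⌋)
        - (∑ i, ((r i : ℤ) + ⌊(r i : ℝ) * a / b⌋))
        - ∑ j, ((s j : ℤ) + ⌊(s j : ℝ) * b / a⌋))) ∧
    (Irrational (b / a) →
      (∑ i, (r i : ℝ)) * a + (∑ j, (s j : ℝ)) * b < (rp : ℝ) * a →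
      1 ≤ ((rp : ℤ) + ⌊(rp : ℝ) * a / b⌋)
        - (∑ i, ((r i : ℤ) + ⌊(r i : ℝ) * a / b⌋))
        - ∑ j, ((s j : ℤ) + ⌊(s j : ℝ) * b / a⌋)) := by
  have hb : 0 < b := ha.trans hab
  refine ⟨even_two_mul _, fun _ harea => ?_⟩
  have key := calc
    ∑ i, actionCount a b (r i * a) + ∑ j, actionCount a b (s j * b)
      ≤ actionCount a b (∑ i, (r i : ℝ) * a) + actionCount a b (∑ j, (s j : ℝ) * b) :=
        add_le_add (sum_actionCount_le a b _ _) (sum_actionCount_le a b _ _)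
    _ ≤ actionCount a b ((∑ i, (r i : ℝ)) * a + (∑ j, (s j : ℝ)) * b) := by
        rw [sum_mul, sum_mul]
        exact le_actionCount_add a b _ _
    _ < actionCount a b (rp * a) := actionCount_lt_natCast_mul_left ha hb harea
  simp only [actionCount_natCast_mul_left ha.ne', actionCount_natCast_mul_right a hb.ne'] at key
  linarith

theorem positive_area_index_ge_two (a b : ℝ) (ha : 0 < a) (hab : a < b)
    (rp : ℕ) (hrp : 0 < rp) (m n : ℕ) (r : Fin m → ℕ) (s : Fin n → ℕ)
    (hr : ∀ i, 0 < r i) (hs : ∀ j, 0 < s j)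
    (harea : (∑ i, (r i : ℝ)) * a + (∑ j, (s j : ℝ)) * b ≤ (rp : ℝ) * a) :
    Even (2 * (((rp : ℤ) + ⌊(rp : ℝ) * a / b⌋)
        - (∑ i, ((r i : ℤ) + ⌊(r i : ℝ) * a / b⌋))
        - ∑ j, ((s j : ℤ) + ⌊(s j : ℝ) * b / a⌋))) ∧
    (Irrational (b / a) →
      (∑ i, (r i : ℝ)) * a + (∑ j, (s j : ℝ)) * b < (rp : ℝ) * a →
      1 ≤ ((rp : ℤ) + ⌊(rp : ℝ) * a / b⌋)
        - (∑ i, ((r i : ℤ) + ⌊(r i : ℝ) * a / b⌋))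
        - ∑ j, ((s j : ℤ) + ⌊(s j : ℝ) * b / a⌋)) :=
  positive_area_index_ge_two_general a b ha hab rp m n r s
end
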